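/- For positive integers n ≥ 2 and s ≤ r, in the digit coloring of the complete graph on vertex set {0, 1, ..., n^r − 1}, every s-colored subgraph has chromatic number at most n^s; that is, for every set S of s colors, the spanning subgraph G_S whose edges are those colored with a color in S satisfies χ(G_S) ≤ n^s. -/
import Mathlib


/-- The digit coloring: the color of the pair `{i, j}` (for `i ≠ j` less than `n^r`)
is the position `d ∈ {1, …, r}`, counted from the most significant digit, of the
leftmost digit in which the `r`-digit base-`n` representations of `i` and `j` differ.
(The digit of `i` at position `d` is `i / n^(r-d) % n`; for `i ≠ j < n^r` the set of
differing positions is a nonempty subset of `{1, …, r}`, and we take its minimum.) -/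
noncomputable def digitColor (n r i j : ℕ) : ℕ :=
  sInf {d : ℕ | i / n ^ (r - d) % n ≠ j / n ^ (r - d) % n}

lemma digitColor_mem (n r i j : ℕ) (S : Finset ℕ) (hSsub : S ⊆ Finset.Icc 1 r)
    (h : digitColor n r i j ∈ S) :
    i / n ^ (r - digitColor n r i j) % n ≠ j / n ^ (r - digitColor n r i j) % n := by
  have hne : {d : ℕ | i / n ^ (r - d) % n ≠ j / n ^ (r - d) % n}.Nonempty := by
    by_contra hcon
    rw [Set.not_nonempty_iff_eq_empty] at hcon
    have : digitColor n r i j = 0 := by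
      simp [digitColor, hcon]
    rw [this] at h
    have := hSsub h
    simp at this
  exact Nat.sInf_mem hne

/-- For `n ≥ 2` and positive integers `s ≤ r`, in the digit coloring of the complete
graph on `{0, 1, …, n^r − 1}`, every `s`-colored subgraph has chromatic number at
most `n^s`: for every set `S ⊆ {1, …, r}` of `s` colors, the spanning subgraph `G_S`
of edges whose digit-color lies in `S` satisfies `χ(G_S) ≤ n^s`. -/
theorem stmt_9 (n r s : ℕ) (hn : 2 ≤ n) (hs : 0 < s) (hsr : s ≤ r)
    (S : Finset ℕ) (hScard : S.card = s) (hSsub : S ⊆ Finset.Icc 1 r) :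
    (SimpleGraph.fromRel
        fun u v : Fin (n ^ r) => digitColor n r (u : ℕ) (v : ℕ) ∈ S).chromaticNumber
      ≤ ((n ^ s : ℕ) : ℕ∞) := by
  have hn0 : 0 < n := by omega
  have C : (SimpleGraph.fromRel
      fun u v : Fin (n ^ r) => digitColor n r (u : ℕ) (v : ℕ) ∈ S).Coloring
      (↥S → Fin n) := by
    refine SimpleGraph.Coloring.mk
      (fun v => fun d => ⟨(v : ℕ) / n ^ (r - (d : ℕ)) % n, Nat.mod_lt _ hn0⟩) ?_
    rintro u v ⟨huv, h | h⟩ heq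
    · have hd := digitColor_mem n r (u : ℕ) (v : ℕ) S hSsub h
      have := congrFun heq ⟨digitColor n r (u : ℕ) (v : ℕ), h⟩
      simp only [Fin.mk.injEq] at this
      exact hd this
    · have hd := digitColor_mem n r (v : ℕ) (u : ℕ) S hSsub h
      have := congrFun heq ⟨digitColor n r (v : ℕ) (u : ℕ), h⟩
      simp only [Fin.mk.injEq] at this
      exact hd this.symm
  have := C.colorable.chromaticNumber_le
  rwa [Fintype.card_fun, Fintype.card_coe, Fintype.card_fin, hScard] at this
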